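/- For every i ∈ {1,…,n} and every integer d ≥ 0, the d-th power Uᵢ^d of the trigonometric Dunkl operator lies in the 𝔽-linear span, inside End_𝔽(𝔽[x₁,…,xₙ]), of the endomorphisms of the form m_f ∘ w ∘ Y_{l₁}∘⋯∘Y_{l_k}, where 0 ≤ k ≤ d, f is a homogeneous polynomial of degree k, w ∈ 𝔖ₙ acts by permutation of variables, and l₁,…,l_k ∈ {1,…,n} (the case k = 0 meaning m_f ∘ w with f a constant). -/

import Mathlib

open MvPolynomial

noncomputable section

variable (F : Type) [Field F] [CharZero F] {n : ℕ}

/-- The action of a permutation `w` on polynomials, permuting the variables. -/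
def permOp (w : Equiv.Perm (Fin n)) : Module.End F (MvPolynomial (Fin n) F) :=
  (MvPolynomial.rename (⇑w)).toLinearMap

/-- The operator exchanging the variables `xᵢ` and `xⱼ`. -/
def swapOp (i j : Fin n) : Module.End F (MvPolynomial (Fin n) F) :=
  permOp F (Equiv.swap i j)

theorem delta_existsUnique (i j : Fin n) (hij : i ≠ j) (f : MvPolynomial (Fin n) F) :
    ∃! g : MvPolynomial (Fin n) F,
      (X i - X j) * g = f - MvPolynomial.rename (⇑(Equiv.swap i j)) f := by
  have hne : (X i - X j : MvPolynomial (Fin n) F) ≠ 0 :=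
    sub_ne_zero_of_ne (fun h => hij (MvPolynomial.X_injective h))
  have hex : ∃ g : MvPolynomial (Fin n) F,
      (X i - X j) * g = f - MvPolynomial.rename (⇑(Equiv.swap i j)) f := by
    induction f using MvPolynomial.induction_on with
    | C a => exact ⟨0, by simp⟩
    | add p q hp hq =>
      obtain ⟨g1, h1⟩ := hp
      obtain ⟨g2, h2⟩ := hq
      exact ⟨g1 + g2, by rw [map_add]; linear_combination h1 + h2⟩
    | mul_X p k hp =>
      obtain ⟨g, hg⟩ := hp
      have hren : MvPolynomial.rename (⇑(Equiv.swap i j)) (p * X k) =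
          MvPolynomial.rename (⇑(Equiv.swap i j)) p * X (Equiv.swap i j k) := by
        simp
      rcases eq_or_ne k i with rfl | hki
      · refine ⟨p + g * X j, ?_⟩
        rw [hren, Equiv.swap_apply_left]
        linear_combination X j * hg
      rcases eq_or_ne k j with rfl | hkj
      · refine ⟨-p + g * X i, ?_⟩
        rw [hren, Equiv.swap_apply_right]
        linear_combination X i * hg
      · refine ⟨g * X k, ?_⟩
        rw [hren, Equiv.swap_apply_of_ne_of_ne hki hkj]
        linear_combination X k * hg
  obtain ⟨g, hg⟩ := hex
  exact ⟨g, hg, fun y hy => mul_left_cancel₀ hne (hy.trans hg.symm)⟩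

/-- The divided-difference operator `Δ_{ij} = (xᵢ - xⱼ)⁻¹ (1 - s_{ij})`. -/
def Delta (i j : Fin n) : Module.End F (MvPolynomial (Fin n) F) where
  toFun f :=
    if h : i ≠ j then (delta_existsUnique F i j h f).exists.choose else 0
  map_add' f g := by
    by_cases h : i ≠ j
    · simp only [dif_pos h]
      apply (delta_existsUnique F i j h (f + g)).unique
      · exact (delta_existsUnique F i j h (f + g)).exists.choose_spec
      · rw [mul_add, (delta_existsUnique F i j h f).exists.choose_spec,
          (delta_existsUnique F i j h g).exists.choose_spec, map_add]
        ring
    · simp [dif_neg h]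
  map_smul' c f := by
    by_cases h : i ≠ j
    · simp only [dif_pos h, RingHom.id_apply]
      apply (delta_existsUnique F i j h (c • f)).unique
      · exact (delta_existsUnique F i j h (c • f)).exists.choose_spec
      · rw [Algebra.mul_smul_comm, (delta_existsUnique F i j h f).exists.choose_spec,
          map_smul, smul_sub]
    · simp [dif_neg h]

/-- The Dunkl operator `Yᵢ = κ ∂ᵢ + Σ_{j ≠ i} Δ_{ij}`. -/
def Dunkl (κ : F) (i : Fin n) : Module.End F (MvPolynomial (Fin n) F) :=
  κ • (MvPolynomial.pderiv i).toLinearMap + ∑ j ∈ Finset.univ.erase i, Delta F i j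

/-- The trigonometric Dunkl (Cherednik) operator `Uᵢ = xᵢ Yᵢ + Σ_{j < i} s_{ji}`. -/
def Cher (κ : F) (i : Fin n) : Module.End F (MvPolynomial (Fin n) F) :=
  LinearMap.mulLeft F (X i) * Dunkl F κ i +
    ∑ j ∈ Finset.univ.filter (fun j => j < i), swapOp F j i

lemma delta_spec (i j : Fin n) (h : i ≠ j) (f : MvPolynomial (Fin n) F) :
    (X i - X j) * Delta F i j f = f - MvPolynomial.rename (⇑(Equiv.swap i j)) f := by
  have : Delta F i j f
      = if h' : i ≠ j then (delta_existsUnique F i j h' f).exists.choose else 0 := rfl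
  rw [this, dif_pos h]
  exact (delta_existsUnique F i j h f).exists.choose_spec

lemma X_sub_X_ne_zero (i j : Fin n) (h : i ≠ j) :
    (X i - X j : MvPolynomial (Fin n) F) ≠ 0 :=
  sub_ne_zero_of_ne fun hh => h (MvPolynomial.X_injective hh)

lemma delta_mul (i j : Fin n) (h : i ≠ j) (g f : MvPolynomial (Fin n) F) :
    Delta F i j (g * f) = g * Delta F i j f
      + Delta F i j g * MvPolynomial.rename (⇑(Equiv.swap i j)) f := by
  apply mul_left_cancel₀ (X_sub_X_ne_zero F i j h)
  have h1 := delta_spec F i j h (g * f)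
  have h2 := delta_spec F i j h f
  have h3 := delta_spec F i j h g
  have h4 : MvPolynomial.rename (⇑(Equiv.swap i j)) (g * f)
      = MvPolynomial.rename (⇑(Equiv.swap i j)) g * MvPolynomial.rename (⇑(Equiv.swap i j)) f :=
    map_mul _ _ _
  linear_combination h1 - g * h2 - MvPolynomial.rename (⇑(Equiv.swap i j)) f * h3 - h4

lemma homogeneousComponent_mul_homog (p g : MvPolynomial (Fin n) F)
    (hp : p.IsHomogeneous 1) (m : ℕ) :
    homogeneousComponent (m + 1) (p * g) = p * homogeneousComponent m g := by
  conv_lhs => rw [← sum_homogeneousComponent g]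
  rw [Finset.mul_sum, map_sum]
  have step : ∀ l, homogeneousComponent (m + 1) (p * homogeneousComponent l g)
      = if l = m then p * homogeneousComponent l g else 0 := by
    intro l
    rw [homogeneousComponent_of_mem ((mem_homogeneousSubmodule _ _).mpr
      (hp.mul (homogeneousComponent_isHomogeneous l g)))]
    by_cases hl : l = m
    · subst hl
      rw [if_pos (Nat.add_comm l 1), if_pos rfl]
    · rw [if_neg (fun hc => hl (by omega)), if_neg hl]
  rw [Finset.sum_congr rfl (fun l _ => step l), Finset.sum_ite_eq' _ m
    (fun l => p * homogeneousComponent l g)]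
  by_cases hm : m ∈ Finset.range (g.totalDegree + 1)
  · rw [if_pos hm]
  · rw [if_neg hm, homogeneousComponent_eq_zero _ _ (Nat.lt_of_succ_le (by simpa using hm)),
      mul_zero]

lemma isHomogeneous_of_homog_mul (p g : MvPolynomial (Fin n) F) (hp : p.IsHomogeneous 1)
    (hpne : p ≠ 0) {k : ℕ} (h : (p * g).IsHomogeneous (k + 1)) : g.IsHomogeneous k := by
  have hcomp : ∀ m, m ≠ k → homogeneousComponent m g = 0 := by
    intro m hm
    have h1 : p * homogeneousComponent m g = homogeneousComponent (m + 1) (p * g) :=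
      (homogeneousComponent_mul_homog F p g hp m).symm
    rw [homogeneousComponent_of_mem ((mem_homogeneousSubmodule _ _).mpr h),
      if_neg (by omega)] at h1
    exact (mul_eq_zero.mp h1).resolve_left hpne
  have hg : g = homogeneousComponent k g := by
    conv_lhs => rw [← sum_homogeneousComponent g]
    exact Finset.sum_eq_single k (fun b _ hb => hcomp b hb)
      (fun hk => homogeneousComponent_eq_zero _ _ (Nat.lt_of_succ_le (by simpa using hk)))
  exact hg ▸ homogeneousComponent_isHomogeneous k g

lemma exists_C_of_isHomogeneous_zero {f : MvPolynomial (Fin n) F}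
    (hf : f.IsHomogeneous 0) : ∃ a : F, f = C a := by
  refine ⟨coeff 0 f, ?_⟩
  ext d
  rw [coeff_C]
  by_cases hd : (0 : (Fin n) →₀ ℕ) = d
  · rw [if_pos hd, ← hd]
  · rw [if_neg hd]
    by_contra hne
    have hdeg := hf hne
    apply hd
    have : Finsupp.degree d = 0 := by
      rw [Finsupp.degree_eq_weight_one]
      exact hdeg
    exact ((Finsupp.degree_eq_zero_iff d).mp this).symm

lemma delta_of_isHomogeneous_zero (i j : Fin n) (h : i ≠ j) {f : MvPolynomial (Fin n) F}
    (hf : f.IsHomogeneous 0) : Delta F i j f = 0 := by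
  obtain ⟨a, rfl⟩ := exists_C_of_isHomogeneous_zero F hf
  apply mul_left_cancel₀ (X_sub_X_ne_zero F i j h)
  rw [delta_spec F i j h]
  simp

lemma delta_isHomogeneous (i j : Fin n) (h : i ≠ j) {f : MvPolynomial (Fin n) F} {k : ℕ}
    (hf : f.IsHomogeneous (k + 1)) : (Delta F i j f).IsHomogeneous k := by
  refine isHomogeneous_of_homog_mul F _ _
    ((isHomogeneous_X F i).sub (isHomogeneous_X F j)) (X_sub_X_ne_zero F i j h) ?_
  rw [delta_spec F i j h]
  exact hf.sub hf.rename_isHomogeneous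

lemma pderiv_isHomogeneous (l : Fin n) {f : MvPolynomial (Fin n) F} {k : ℕ}
    (hf : f.IsHomogeneous (k + 1)) : (MvPolynomial.pderiv l f).IsHomogeneous k := by
  conv_lhs => rw [← support_sum_monomial_coeff f]
  rw [map_sum]
  apply MvPolynomial.IsHomogeneous.sum
  intro d hd
  rw [pderiv_monomial]
  by_cases hz : d l = 0
  · rw [hz]
    simp only [Nat.cast_zero, mul_zero]
    rw [monomial_zero]
    exact isHomogeneous_zero _ _ _
  · apply isHomogeneous_monomial
    have hdd : Finsupp.degree d = k + 1 := by
      by_contra hne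
      exact (mem_support_iff.mp hd) (hf.coeff_eq_zero hne)
    have hle : Finsupp.single l 1 ≤ d :=
      Finsupp.single_le_iff.mpr (Nat.one_le_iff_ne_zero.mpr hz)
    have hadd : (d - Finsupp.single l 1) + Finsupp.single l 1 = d :=
      tsub_add_cancel_of_le hle
    have hs : Finsupp.degree (Finsupp.single l (1 : ℕ)) = 1 := by
      rw [Finsupp.degree_single]
    have : Finsupp.degree (d - Finsupp.single l 1) + Finsupp.degree (Finsupp.single l (1:ℕ))
        = Finsupp.degree d := by
      rw [Finsupp.degree_eq_weight_one, ← map_add, hadd]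
    omega

lemma pderiv_of_isHomogeneous_zero (l : Fin n) {f : MvPolynomial (Fin n) F}
    (hf : f.IsHomogeneous 0) : MvPolynomial.pderiv l f = 0 := by
  obtain ⟨a, rfl⟩ := exists_C_of_isHomogeneous_zero F hf
  simp

lemma X_mul_pderiv_isHomogeneous (a l : Fin n) {f : MvPolynomial (Fin n) F} {k : ℕ}
    (hf : f.IsHomogeneous k) : (X a * MvPolynomial.pderiv l f).IsHomogeneous k := by
  cases k with
  | zero => rw [pderiv_of_isHomogeneous_zero F l hf, mul_zero]; exact isHomogeneous_zero _ _ _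
  | succ k =>
    have := (isHomogeneous_X F a).mul (pderiv_isHomogeneous F l hf)
    simpa [add_comm] using this

lemma X_mul_delta_isHomogeneous (a i j : Fin n) (h : i ≠ j) {f : MvPolynomial (Fin n) F}
    {k : ℕ} (hf : f.IsHomogeneous k) : (X a * Delta F i j f).IsHomogeneous k := by
  cases k with
  | zero => rw [delta_of_isHomogeneous_zero F i j h hf, mul_zero]; exact isHomogeneous_zero _ _ _
  | succ k =>
    have := (isHomogeneous_X F a).mul (delta_isHomogeneous F i j h hf)
    simpa [add_comm] using this

lemma permOp_apply (w : Equiv.Perm (Fin n)) (f : MvPolynomial (Fin n) F) :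
    permOp F w f = MvPolynomial.rename (⇑w) f := rfl

lemma permOp_one : permOp F (1 : Equiv.Perm (Fin n)) = 1 := by
  apply LinearMap.ext
  intro f
  simp [permOp_apply, Equiv.Perm.coe_one, rename_id]

lemma permOp_mul (w v : Equiv.Perm (Fin n)) :
    permOp F w * permOp F v = permOp F (w * v) := by
  apply LinearMap.ext
  intro f
  simp [Module.End.mul_apply, permOp_apply, rename_rename, Equiv.Perm.coe_mul]

lemma permOp_mulLeft (w : Equiv.Perm (Fin n)) (g : MvPolynomial (Fin n) F) :
    permOp F w * LinearMap.mulLeft F g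
      = LinearMap.mulLeft F (MvPolynomial.rename (⇑w) g) * permOp F w := by
  apply LinearMap.ext
  intro f
  simp [Module.End.mul_apply, permOp_apply, LinearMap.mulLeft_apply]

lemma dunkl_apply (κ : F) (i : Fin n) (f : MvPolynomial (Fin n) F) :
    Dunkl F κ i f = κ • MvPolynomial.pderiv i f
      + ∑ j ∈ Finset.univ.erase i, Delta F i j f := by
  simp [Dunkl, LinearMap.add_apply, LinearMap.smul_apply, LinearMap.sum_apply]

lemma rename_delta (w : Equiv.Perm (Fin n)) (i j : Fin n) (h : i ≠ j)
    (f : MvPolynomial (Fin n) F) :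
    MvPolynomial.rename (⇑w) (Delta F i j f)
      = Delta F (w i) (w j) (MvPolynomial.rename (⇑w) f) := by
  have h' : w i ≠ w j := fun hh => h (w.injective hh)
  apply mul_left_cancel₀ (X_sub_X_ne_zero F _ _ h')
  rw [delta_spec F _ _ h']
  have hX : (X (w i) - X (w j) : MvPolynomial (Fin n) F)
      = MvPolynomial.rename (⇑w) (X i - X j) := by simp
  rw [hX, ← map_mul, delta_spec F i j h, map_sub, rename_rename, rename_rename,
    w.injective.swap_comp i j]

lemma permOp_dunkl (κ : F) (w : Equiv.Perm (Fin n)) (l : Fin n) :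
    permOp F w * Dunkl F κ l = Dunkl F κ (w l) * permOp F w := by
  apply LinearMap.ext
  intro f
  rw [Module.End.mul_apply, Module.End.mul_apply, dunkl_apply, dunkl_apply,
    permOp_apply, permOp_apply, map_add, map_smul, map_sum,
    pderiv_rename w.injective]
  congr 1
  refine Finset.sum_equiv w ?_ ?_
  · intro j
    simp [Finset.mem_erase, w.injective.ne_iff]
  · intro j hj
    exact rename_delta F w l j (fun hh => (Finset.mem_erase.mp hj).1 hh.symm) f

lemma dunkl_mulLeft (κ : F) (i : Fin n) (g : MvPolynomial (Fin n) F) :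
    Dunkl F κ i * LinearMap.mulLeft F g =
      LinearMap.mulLeft F g * Dunkl F κ i
        + κ • LinearMap.mulLeft F (MvPolynomial.pderiv i g)
        + ∑ j ∈ Finset.univ.erase i,
            LinearMap.mulLeft F (Delta F i j g) * swapOp F i j := by
  apply LinearMap.ext
  intro f
  simp only [Module.End.mul_apply, LinearMap.add_apply, LinearMap.smul_apply,
    LinearMap.sum_apply, LinearMap.mulLeft_apply, dunkl_apply]
  rw [pderiv_mul]
  have hsum : ∀ j ∈ Finset.univ.erase i, Delta F i j (g * f)
      = g * Delta F i j f + Delta F i j g * MvPolynomial.rename (⇑(Equiv.swap i j)) f := by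
    intro j hj
    exact delta_mul F i j (fun hh => (Finset.mem_erase.mp hj).1 hh.symm) g f
  rw [Finset.sum_congr rfl hsum, Finset.sum_add_distrib]
  simp only [swapOp, permOp, AlgHom.toLinearMap_apply, smul_add, mul_add, Finset.mul_sum,
    mul_smul_comm]
  abel
/-- The generating set of operators of order at most `d`. -/
def genSet (κ : F) (d : ℕ) : Set (Module.End F (MvPolynomial (Fin n) F)) :=
  {e : Module.End F (MvPolynomial (Fin n) F) |
    ∃ k ≤ d, ∃ f : MvPolynomial (Fin n) F, f.IsHomogeneous k ∧
      ∃ (w : Equiv.Perm (Fin n)) (ls : List (Fin n)), ls.length = k ∧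
        e = LinearMap.mulLeft F f * permOp F w * (ls.map (Dunkl F κ)).prod}

lemma cher_mul_mem (κ : F) (i : Fin n) (d : ℕ) {e : Module.End F (MvPolynomial (Fin n) F)}
    (he : e ∈ genSet F κ d) :
    Cher F κ i * e ∈ Submodule.span F (genSet F κ (d + 1)) := by
  obtain ⟨k, hk, f, hf, w, ls, hlen, rfl⟩ := he
  have hD : Dunkl F κ i * permOp F w = permOp F w * Dunkl F κ (w⁻¹ i) := by
    have h := permOp_dunkl F κ w (w⁻¹ i)
    rw [show w (w⁻¹ i) = i from w.apply_symm_apply i] at h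
    exact h.symm
  set P : Module.End F (MvPolynomial (Fin n) F) := (ls.map (Dunkl F κ)).prod with hP
  have R1 : ∀ E : Module.End F (MvPolynomial (Fin n) F),
      Dunkl F κ i * (permOp F w * E) = permOp F w * (Dunkl F κ (w⁻¹ i) * E) := by
    intro E
    rw [← mul_assoc, hD, mul_assoc]
  have R2 : ∀ (a b : MvPolynomial (Fin n) F) (E : Module.End F (MvPolynomial (Fin n) F)),
      LinearMap.mulLeft F a * (LinearMap.mulLeft F b * E) = LinearMap.mulLeft F (a * b) * E := by
    intro a b E
    rw [LinearMap.mulLeft_mul, ← Module.End.mul_eq_comp, mul_assoc]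
  have R3 : ∀ (u v : Equiv.Perm (Fin n)) (E : Module.End F (MvPolynomial (Fin n) F)),
      permOp F u * (permOp F v * E) = permOp F (u * v) * E := by
    intro u v E
    rw [← mul_assoc, permOp_mul]
  have key : Cher F κ i * (LinearMap.mulLeft F f * permOp F w * P)
      = LinearMap.mulLeft F (X i * f) * permOp F w * ((w⁻¹ i :: ls).map (Dunkl F κ)).prod
        + κ • (LinearMap.mulLeft F (X i * MvPolynomial.pderiv i f) * permOp F w * P)
        + ∑ j ∈ Finset.univ.erase i,
            LinearMap.mulLeft F (X i * Delta F i j f) * permOp F (Equiv.swap i j * w) * P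
        + ∑ j ∈ Finset.univ.filter (fun j => j < i),
            LinearMap.mulLeft F (MvPolynomial.rename (⇑(Equiv.swap j i)) f)
              * permOp F (Equiv.swap j i * w) * P := by
    calc Cher F κ i * (LinearMap.mulLeft F f * permOp F w * P)
        = LinearMap.mulLeft F (X i) * ((Dunkl F κ i * LinearMap.mulLeft F f)
              * (permOp F w * P))
          + ∑ j ∈ Finset.univ.filter (fun j => j < i),
              (swapOp F j i * LinearMap.mulLeft F f) * (permOp F w * P) := by
          simp only [Cher, add_mul, Finset.sum_mul, mul_assoc]
      _ = LinearMap.mulLeft F (X i) * ((LinearMap.mulLeft F f * Dunkl F κ i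
              + κ • LinearMap.mulLeft F (MvPolynomial.pderiv i f)
              + ∑ j ∈ Finset.univ.erase i,
                  LinearMap.mulLeft F (Delta F i j f) * swapOp F i j)
              * (permOp F w * P))
          + ∑ j ∈ Finset.univ.filter (fun j => j < i),
              (LinearMap.mulLeft F (MvPolynomial.rename (⇑(Equiv.swap j i)) f)
                * permOp F (Equiv.swap j i)) * (permOp F w * P) := by
          rw [dunkl_mulLeft]
          congr 1
          refine Finset.sum_congr rfl fun j _ => ?_
          rw [show swapOp F j i = permOp F (Equiv.swap j i) from rfl, permOp_mulLeft]
      _ = _ := by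
          simp only [List.map_cons, List.prod_cons, add_mul, mul_add, Finset.sum_mul,
            Finset.mul_sum, smul_mul_assoc, mul_smul_comm, swapOp, mul_assoc]
          simp only [R1, R2, R3]
          rfl
  rw [key]
  refine add_mem (add_mem (add_mem ?_ ?_) ?_) ?_
  · apply Submodule.subset_span
    refine ⟨k + 1, by omega, X i * f, ?_, w, w⁻¹ i :: ls, by simp [hlen], rfl⟩
    have h1 := (isHomogeneous_X F i).mul hf
    rwa [add_comm] at h1
  · exact Submodule.smul_mem _ κ (Submodule.subset_span
      ⟨k, by omega, X i * MvPolynomial.pderiv i f,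
        X_mul_pderiv_isHomogeneous F i i hf, w, ls, hlen, rfl⟩)
  · refine Submodule.sum_mem _ fun j hj => Submodule.subset_span
      ⟨k, by omega, X i * Delta F i j f,
        X_mul_delta_isHomogeneous F i i j ((Finset.mem_erase.mp hj).1.symm) hf,
        Equiv.swap i j * w, ls, hlen, rfl⟩
  · refine Submodule.sum_mem _ fun j _ => Submodule.subset_span
      ⟨k, by omega, MvPolynomial.rename (⇑(Equiv.swap j i)) f,
        hf.rename_isHomogeneous, Equiv.swap j i * w, ls, hlen, rfl⟩
theorem stmt18 (n : ℕ) (hn : 2 ≤ n) (κ : F) (i : Fin n) (d : ℕ) :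
    Cher F κ i ^ d ∈
      Submodule.span F
        {e : Module.End F (MvPolynomial (Fin n) F) |
          ∃ k ≤ d, ∃ f : MvPolynomial (Fin n) F, f.IsHomogeneous k ∧
            ∃ (w : Equiv.Perm (Fin n)) (ls : List (Fin n)), ls.length = k ∧
              e = LinearMap.mulLeft F f * permOp F w * (ls.map (Dunkl F κ)).prod} := by

  show Cher F κ i ^ d ∈ Submodule.span F (genSet F κ d)
  induction d with
  | zero =>
    apply Submodule.subset_span
    refine ⟨0, le_rfl, 1, isHomogeneous_one _ _, 1, [], rfl, ?_⟩
    rw [pow_zero, List.map_nil, List.prod_nil, mul_one, permOp_one, mul_one,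
      LinearMap.mulLeft_one]
    rfl
  | succ d ih =>
    rw [pow_succ']
    exact Submodule.span_induction
      (p := fun e _ => Cher F κ i * e ∈ Submodule.span F (genSet F κ (d + 1)))
      (fun x hx => cher_mul_mem F κ i d hx)
      (by show Cher F κ i * 0 ∈ _; rw [mul_zero]; exact Submodule.zero_mem _)
      (fun x y hx hy px py => by show Cher F κ i * (x + y) ∈ _; rw [mul_add]; exact add_mem px py)
      (fun a x hx px => by show Cher F κ i * (a • x) ∈ _; rw [mul_smul_comm]; exact Submodule.smul_mem _ a px) ih
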